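/- Four-matrix trace as an overlap of a padded vector with a vector containing garbage: let A ∈ ℂ^{n×m}, B ∈ ℂ^{m×l}, C ∈ ℂ^{l×k}, D ∈ ℂ^{k×n} with A, B, C, D all nonzero. Let u := (B ⊗ Dᵀ)·vec(Cᵀ) / (‖B‖_F·‖C‖_F·‖D‖_F) ∈ ℂ^{mn}, let ξ ∈ ℂ^{mn·(lk−1)} be any vector such that the concatenated vector φ := u ⊕ ξ ∈ ℂ^{mn·lk} satisfies ‖φ‖₂ = 1, and let ψ := vec(conj(A)) ⊕ 0_{mn·(lk−1)} ∈ ℂ^{mn·lk}, where conj(A) is the entrywise complex conjugate of A. Then ⟨ψ/‖ψ‖₂, φ⟩ = Tr(A·B·C·D) / (‖A‖_F·‖B‖_F·‖C‖_F·‖D‖_F). -/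

import Mathlib

open Matrix BigOperators

namespace PaperMVT

theorem left_pos {m n : ℕ} (t : Fin (m * n)) : 0 < m := by
  rcases Nat.eq_zero_or_pos m with h | h
  · exfalso; subst h; have ht := t.isLt; simp at ht
  · exact h

theorem right_pos {m n : ℕ} (t : Fin (m * n)) : 0 < n := by
  rcases Nat.eq_zero_or_pos n with h | h
  · exfalso; subst h; have ht := t.isLt; simp at ht
  · exact h

theorem idx_lt {a b x y : ℕ} (hx : x < a) (hy : y < b) : b * x + y < b * a :=
  calc b * x + y < b * x + b := Nat.add_lt_add_left hy _
    _ = b * (x + 1) := by ring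
    _ ≤ b * a := Nat.mul_le_mul le_rfl hx

theorem idx_lt' {a b x y : ℕ} (hx : x < a) (hy : y < b) : b * x + y < a * b :=
  lt_of_lt_of_le (idx_lt hx hy) (le_of_eq (Nat.mul_comm b a))

/-- Column-major vectorization: `vec A (m*j+i) = A i j`. -/
noncomputable def vec {m n : ℕ} (A : Matrix (Fin m) (Fin n) ℂ) : Fin (m * n) → ℂ :=
  fun t => A ⟨(t : ℕ) % m, Nat.mod_lt _ (left_pos t)⟩
    ⟨(t : ℕ) / m, Nat.div_lt_of_lt_mul t.isLt⟩

/-- Kronecker product with flat indexing: `(kron A B) (p*i+k) (q*j+l) = A i j * B k l`. -/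
noncomputable def kron {m n p q : ℕ} (A : Matrix (Fin m) (Fin n) ℂ)
    (B : Matrix (Fin p) (Fin q) ℂ) : Matrix (Fin (m * p)) (Fin (n * q)) ℂ :=
  Matrix.of fun r c =>
    A ⟨(r : ℕ) / p, Nat.div_lt_of_lt_mul (Nat.mul_comm m p ▸ r.isLt)⟩
      ⟨(c : ℕ) / q, Nat.div_lt_of_lt_mul (Nat.mul_comm n q ▸ c.isLt)⟩ *
    B ⟨(r : ℕ) % p, Nat.mod_lt _ (right_pos r)⟩
      ⟨(c : ℕ) % q, Nat.mod_lt _ (right_pos c)⟩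

/-- Kronecker product of column vectors: `(kronVec x y) (b*i+k) = x i * y k`. -/
noncomputable def kronVec {a b : ℕ} (x : Fin a → ℂ) (y : Fin b → ℂ) : Fin (a * b) → ℂ :=
  fun t => x ⟨(t : ℕ) / b, Nat.div_lt_of_lt_mul (Nat.mul_comm a b ▸ t.isLt)⟩ *
    y ⟨(t : ℕ) % b, Nat.mod_lt _ (right_pos t)⟩

/-- A vector as a one-row matrix. -/
noncomputable def rowOf {N : ℕ} (v : Fin N → ℂ) : Matrix (Fin 1) (Fin N) ℂ :=
  Matrix.of fun _ c => v c

/-- Frobenius norm. -/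
noncomputable def frobNorm {r c : ℕ} (M : Matrix (Fin r) (Fin c) ℂ) : ℝ :=
  Real.sqrt (∑ i, ∑ j, Complex.normSq (M i j))

/-- Euclidean norm of a vector. -/
noncomputable def enorm2 {N : ℕ} (v : Fin N → ℂ) : ℝ :=
  Real.sqrt (∑ t, Complex.normSq (v t))

/-- Standard Hermitian inner product, conjugate-linear in the first argument. -/
noncomputable def cinner {N : ℕ} (x y : Fin N → ℂ) : ℂ :=
  ∑ t, (starRingEnd ℂ) (x t) * y t

/-- Matrices of arbitrary (dependent) dimensions. -/
def MatS : Type := Σ r c : ℕ, Matrix (Fin r) (Fin c) ℂ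

noncomputable def toS {r c : ℕ} (M : Matrix (Fin r) (Fin c) ℂ) : MatS := ⟨r, c, M⟩

noncomputable def kronS (M N : MatS) : MatS :=
  ⟨M.1 * N.1, M.2.1 * N.2.1, kron M.2.2 N.2.2⟩

/-- `(vec M)^T` as a one-row matrix, packaged. -/
noncomputable def vecRowS (M : MatS) : MatS := ⟨1, M.1 * M.2.1, rowOf (vec M.2.2)⟩

/-- `F^(p)(X₁,…,X_p) = X₁ ⊗ (vec F^(p-1)(X₂,…,X_p))^T`, on a nonempty list. -/
noncomputable def Ffun : List MatS → MatS
  | [] => ⟨1, 1, 1⟩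
  | [X] => X
  | X :: Y :: rest => kronS X (vecRowS (Ffun (Y :: rest)))

/-- Entry of a packaged matrix, extended by zero. -/
noncomputable def padM (M : MatS) (i j : ℕ) : ℂ :=
  if h : i < M.1 ∧ j < M.2.1 then M.2.2 ⟨i, h.1⟩ ⟨j, h.2⟩ else 0

/-- Entry of a vector, extended by zero. -/
noncomputable def padV {N : ℕ} (v : Fin N → ℂ) (t : ℕ) : ℂ :=
  if h : t < N then v ⟨t, h⟩ else 0

/-- Product `A (a+1) * A (a+2) * ⋯ * A (a+len)` of a chain of matrices. -/
noncomputable def matProdLen (n : ℕ → ℕ) (A : ∀ i : ℕ, Matrix (Fin (n (i - 1))) (Fin (n i)) ℂ)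
    (a : ℕ) : (len : ℕ) → Matrix (Fin (n a)) (Fin (n (a + len))) ℂ
  | 0 => show Matrix (Fin (n a)) (Fin (n (a + 0))) ℂ from (1 : Matrix (Fin (n a)) (Fin (n a)) ℂ)
  | len + 1 =>
      show Matrix (Fin (n a)) (Fin (n (a + (len + 1)))) ℂ from
        matProdLen n A a len *
          (show Matrix (Fin (n (a + len))) (Fin (n (a + len + 1))) ℂ from A (a + len + 1))

/-!
Only the first `m * n` coordinates of `ψ` are nonzero, so the garbage `ξ` drops out of the
overlap. Identifying `Fin (m * n)` with `Fin n × Fin m` through `finProdFinEquiv` turns the flat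
`vec` and `kron` into Mathlib's `Matrix.vec` and `⊗ₖ`, so Roth's lemma
`(B ⊗ Dᵀ) vec Cᵀ = vec (Dᵀ Cᵀ Bᵀ)` applies, and the overlap of `vec (conj A)` with it is
`Tr (Aᵀ (B C D)ᵀ) = Tr (A B C D)`. Finally `‖ψ‖₂ = ‖A‖_F`.
-/

open scoped Kronecker

theorem cinner_eq_star_dotProduct {N : ℕ} (x y : Fin N → ℂ) : cinner x y = star x ⬝ᵥ y := rfl

theorem cinner_zero_left {N : ℕ} (y : Fin N → ℂ) : cinner 0 y = 0 := by
  simp [cinner]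

theorem cinner_smul_left {N : ℕ} (c : ℂ) (x y : Fin N → ℂ) :
    cinner (c • x) y = star c * cinner x y := by
  simp [cinner_eq_star_dotProduct, star_smul, smul_dotProduct]

theorem cinner_smul_right {N : ℕ} (c : ℂ) (x y : Fin N → ℂ) :
    cinner x (c • y) = c * cinner x y := by
  simp [cinner_eq_star_dotProduct, dotProduct_smul]

theorem cinner_append {a b : ℕ} (x₁ y₁ : Fin a → ℂ) (x₂ y₂ : Fin b → ℂ) :
    cinner (Fin.append x₁ x₂) (Fin.append y₁ y₂) = cinner x₁ y₁ + cinner x₂ y₂ := by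
  simp [cinner, Fin.sum_univ_add]

theorem enorm2_append_zero {a b : ℕ} (x : Fin a → ℂ) :
    enorm2 (Fin.append x (0 : Fin b → ℂ)) = enorm2 x := by
  simp [enorm2, Fin.sum_univ_add]

theorem vec_comp_cast {m n : ℕ} (P : Matrix (Fin m) (Fin n) ℂ) :
    vec P ∘ Fin.cast (Nat.mul_comm n m) = Matrix.vec P ∘ finProdFinEquiv.symm :=
  rfl

theorem kron_eq_reindex_kronecker {m n p q : ℕ} (X : Matrix (Fin m) (Fin n) ℂ)
    (Y : Matrix (Fin p) (Fin q) ℂ) :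
    kron X Y = Matrix.reindex finProdFinEquiv finProdFinEquiv (X ⊗ₖ Y) :=
  rfl

theorem kron_mulVec_vec_comp_cast {a b c d : ℕ} (M : Matrix (Fin d) (Fin c) ℂ)
    (X : Matrix (Fin a) (Fin b) ℂ) (Y : Matrix (Fin b) (Fin c) ℂ) :
    kron M X *ᵥ (vec Y ∘ Fin.cast (Nat.mul_comm c b)) =
      vec (X * Y * Mᵀ) ∘ Fin.cast (Nat.mul_comm d a) := by
  rw [vec_comp_cast, vec_comp_cast, kron_eq_reindex_kronecker, reindex_apply,
    submatrix_mulVec_equiv, Equiv.symm_symm, Function.comp_assoc, Equiv.symm_comp_self,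
    Function.comp_id, kronecker_mulVec_vec]

theorem cinner_vec_comp_cast {m n : ℕ} (P Q : Matrix (Fin m) (Fin n) ℂ) :
    cinner (vec P ∘ Fin.cast (Nat.mul_comm n m)) (vec Q ∘ Fin.cast (Nat.mul_comm n m)) =
      (Pᴴ * Q).trace := by
  rw [vec_comp_cast, vec_comp_cast, cinner_eq_star_dotProduct, ← star_vec_dotProduct_vec]
  change star (Matrix.vec P) ∘ _ ⬝ᵥ _ = _
  rw [comp_equiv_symm_dotProduct, Function.comp_assoc, Equiv.symm_comp_self, Function.comp_id]

theorem enorm2_vec_comp_cast {m n : ℕ} (P : Matrix (Fin m) (Fin n) ℂ) :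
    enorm2 (vec P ∘ Fin.cast (Nat.mul_comm n m)) = frobNorm P := by
  rw [vec_comp_cast, enorm2, frobNorm, ← finProdFinEquiv.sum_comp]
  simp [Fintype.sum_prod_type, Matrix.vec, Finset.sum_comm (γ := Fin n)]

theorem frobNorm_map_conj {m n : ℕ} (P : Matrix (Fin m) (Fin n) ℂ) :
    frobNorm (P.map (starRingEnd ℂ)) = frobNorm P := by
  simp [frobNorm]

theorem trace_four_as_overlap_general {n m l k : ℕ}
    (A : Matrix (Fin n) (Fin m) ℂ) (B : Matrix (Fin m) (Fin l) ℂ)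
    (C : Matrix (Fin l) (Fin k) ℂ) (D : Matrix (Fin k) (Fin n) ℂ)
    (ξ : Fin (m * n * (l * k - 1)) → ℂ) :
    let u : Fin (m * n) → ℂ := fun i =>
      (kron B Dᵀ).mulVec (vec Cᵀ ∘ Fin.cast (Nat.mul_comm l k)) i /
        ((frobNorm B * frobNorm C * frobNorm D : ℝ) : ℂ)
    let φ : Fin (m * n + m * n * (l * k - 1)) → ℂ := Fin.append u ξ
    let ψ : Fin (m * n + m * n * (l * k - 1)) → ℂ :=
      Fin.append (vec (A.map (starRingEnd ℂ)) ∘ Fin.cast (Nat.mul_comm m n))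
        (0 : Fin (m * n * (l * k - 1)) → ℂ)
    enorm2 φ = 1 →
    cinner (((enorm2 ψ : ℝ) : ℂ)⁻¹ • ψ) φ =
      Matrix.trace (A * B * C * D) /
        ((frobNorm A * frobNorm B * frobNorm C * frobNorm D : ℝ) : ℂ) := by
  intro u φ ψ _
  have hu : u = ((frobNorm B * frobNorm C * frobNorm D : ℝ) : ℂ)⁻¹ •
      (vec (Dᵀ * Cᵀ * Bᵀ) ∘ Fin.cast (Nat.mul_comm m n)) := by
    funext i
    simp only [u, kron_mulVec_vec_comp_cast, Pi.smul_apply, smul_eq_mul, div_eq_inv_mul]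
  have htrace : ((A.map (starRingEnd ℂ))ᴴ * (Dᵀ * Cᵀ * Bᵀ)).trace = (A * B * C * D).trace := by
    rw [show (A.map (starRingEnd ℂ))ᴴ = Aᵀ by ext; simp, ← transpose_mul, ← transpose_mul,
      ← transpose_mul, trace_transpose, trace_mul_comm]
    simp only [Matrix.mul_assoc]
  have hψ : enorm2 ψ = frobNorm A := by
    rw [enorm2_append_zero, enorm2_vec_comp_cast, frobNorm_map_conj]
  rw [hψ, cinner_smul_left, cinner_append, hu, cinner_smul_right, cinner_vec_comp_cast,
    htrace, cinner_zero_left, add_zero, Complex.star_def, map_inv₀, Complex.conj_ofReal]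
  push_cast
  ring

/-- four-matrix trace as an overlap of a padded vector with a
vector containing garbage. -/
theorem trace_four_as_overlap {n m l k : ℕ}
    (A : Matrix (Fin n) (Fin m) ℂ) (B : Matrix (Fin m) (Fin l) ℂ)
    (C : Matrix (Fin l) (Fin k) ℂ) (D : Matrix (Fin k) (Fin n) ℂ)
    (hA : A ≠ 0) (hB : B ≠ 0) (hC : C ≠ 0) (hD : D ≠ 0)
    (ξ : Fin (m * n * (l * k - 1)) → ℂ) :
    let u : Fin (m * n) → ℂ := fun i =>
      (kron B Dᵀ).mulVec (vec Cᵀ ∘ Fin.cast (Nat.mul_comm l k)) i /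
        ((frobNorm B * frobNorm C * frobNorm D : ℝ) : ℂ)
    let φ : Fin (m * n + m * n * (l * k - 1)) → ℂ := Fin.append u ξ
    let ψ : Fin (m * n + m * n * (l * k - 1)) → ℂ :=
      Fin.append (vec (A.map (starRingEnd ℂ)) ∘ Fin.cast (Nat.mul_comm m n))
        (0 : Fin (m * n * (l * k - 1)) → ℂ)
    enorm2 φ = 1 →
    cinner (((enorm2 ψ : ℝ) : ℂ)⁻¹ • ψ) φ =
      Matrix.trace (A * B * C * D) /
        ((frobNorm A * frobNorm B * frobNorm C * frobNorm D : ℝ) : ℂ) :=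
  trace_four_as_overlap_general A B C D ξ

end PaperMVT
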